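/- arXiv:1610.01063 — 2 statements merged into one kernel-verified Lean document; each statement's English description precedes it below -/
import Mathlib

section
/- If N = p_1^{2a_1} p_2^{2a_2} ⋯ p_t^{2a_t} = m^2 is a quasiperfect number (where p_1, ..., p_t are distinct primes and a_1, ..., a_t are positive integers), then there exists an index j such that p_j ≡ 1 (mod 4) and 2a_j + 1 has no divisor congruent to 5 modulo 8. -/
/-- A positive integer `N` is quasiperfect if `σ(N) = 2N + 1`. -/
def Quasiperfect (N : ℕ) : Prop :=
  0 < N ∧ ArithmeticFunction.sigma 1 N = 2 * N + 1

/-!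
Every divisor of `σ(N) = 2m² + 1` is `1` or `3` mod `8`, since `-2` is a square modulo each of
its prime factors. As `N` is odd (a factor `σ(2^{2a}) = 2^{2a+1} - 1 ≡ 7 (mod 8)` is impossible),
`2N + 1 ≡ 3 (mod 8)`, so some factor `σ(p^{2a}) = 1 + p + ⋯ + p^{2a}` is `≡ 3 (mod 8)`. For odd
`p` this sum is `≡ 1 + a(p + 1) (mod 8)`, which forces `p ≡ 1 (mod 4)`. Finally, for `d ∣ 2a + 1`
the sum `1 + p + ⋯ + p^{d-1}` divides `σ(p^{2a})`, and it is `≡ 5 (mod 8)` when `d ≡ 5 (mod 8)`.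
-/

open Finset ArithmeticFunction

theorem geom_sum_dvd_geom_sum_of_dvd {R : Type*} [CommSemiring R] (x : R) {d n : ℕ}
    (h : d ∣ n) : (∑ i ∈ range d, x ^ i) ∣ ∑ i ∈ range n, x ^ i := by
  obtain ⟨k, rfl⟩ := h
  induction k with
  | zero => simp
  | succ k ih =>
    rw [mul_add_one, sum_range_add]
    refine dvd_add ih ⟨x ^ (d * k), ?_⟩
    rw [sum_mul]
    exact sum_congr rfl fun i _ => by rw [pow_add, mul_comm]

theorem geom_sum_two_mul_add_one_of_sq_eq_one {R : Type*} [Semiring R] {x : R} (hx : x ^ 2 = 1)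
    (e : ℕ) : ∑ i ∈ range (2 * e + 1), x ^ i = 1 + e * (x + 1) := by
  induction e with
  | zero => simp
  | succ e ih =>
    have hodd : x ^ (2 * e + 1) = x := by rw [pow_succ, pow_mul, hx, one_pow, one_mul]
    have heven : x ^ (2 * e + 1 + 1) = 1 := by rw [add_assoc, ← mul_add_one, pow_mul, hx, one_pow]
    rw [show 2 * (e + 1) + 1 = 2 * e + 1 + 1 + 1 by ring, sum_range_succ, sum_range_succ, ih, hodd,
      heven]
    push_cast
    noncomm_ring

namespace Nat

theorem sq_mod_eight_of_odd {n : ℕ} (hn : Odd n) : n ^ 2 % 8 = 1 := by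
  obtain ⟨k, rfl⟩ := hn
  obtain ⟨l, hl⟩ := even_mul_succ_self k
  have : (2 * k + 1) ^ 2 = 4 * (k * (k + 1)) + 1 := by ring
  omega

theorem geom_sum_two_mod_eight {n : ℕ} (hn : 3 ≤ n) : (∑ i ∈ range n, 2 ^ i) % 8 = 7 := by
  simpa [geomSum_eq le_rfl, mersenne] using mersenne_mod_eight hn

theorem geom_sum_two_mul_add_one_modEq_eight {p : ℕ} (hp : Odd p) (e : ℕ) :
    ∑ i ∈ range (2 * e + 1), p ^ i ≡ 1 + e * (p + 1) [MOD 8] := by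
  have hsq : (p : ZMod 8) ^ 2 = 1 := by
    exact_mod_cast (ZMod.natCast_eq_natCast_iff' (p ^ 2) 1 8).2 (sq_mod_eight_of_odd hp)
  rw [← ZMod.natCast_eq_natCast_iff]
  push_cast
  exact geom_sum_two_mul_add_one_of_sq_eq_one hsq e

theorem mod_four_eq_one_of_geom_sum_mod_eight_eq_three {p e : ℕ} (hp : Odd p)
    (h : (∑ i ∈ range (2 * e + 1), p ^ i) % 8 = 3) : p % 4 = 1 := by
  have hS := geom_sum_two_mul_add_one_modEq_eight hp e
  unfold ModEq at hS
  by_contra hne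
  have h4 : 4 ∣ p + 1 := by rw [odd_iff] at hp; omega
  obtain ⟨c, hc⟩ := h4.mul_left e
  omega

theorem geom_sum_mod_eight_eq_five {p d : ℕ} (hp : p % 4 = 1) (hd : d % 8 = 5) :
    (∑ i ∈ range d, p ^ i) % 8 = 5 := by
  obtain ⟨u, rfl⟩ : ∃ u, d = 2 * (4 * u + 2) + 1 := ⟨d / 8, by omega⟩
  have hS := geom_sum_two_mul_add_one_modEq_eight (p := p) (odd_iff.2 (by omega)) (4 * u + 2)
  unfold ModEq at hS
  have hp1 : p + 1 = 4 * (p / 4) + 2 := by omega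
  have hmul : (4 * u + 2) * (4 * (p / 4) + 2) = 8 * (2 * u * (p / 4) + u + p / 4) + 4 := by ring
  rw [hp1, hmul] at hS
  omega

theorem mod_eight_of_dvd_two_mul_sq_add_one {m d : ℕ} (hd : d ∣ 2 * m ^ 2 + 1) :
    d % 8 = 1 ∨ d % 8 = 3 := by
  induction d using recOnMul with
  | zero => omega
  | one => exact .inl rfl
  | prime q hq =>
    have hq2 : q ≠ 2 := by rintro rfl; omega
    have := Fact.mk hq
    refine (ZMod.exists_sq_eq_neg_two_iff hq2).1 ⟨2 * m, ?_⟩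
    have h0 : ((2 * m ^ 2 + 1 : ℕ) : ZMod q) = 0 := (ZMod.natCast_eq_zero_iff _ _).2 hd
    push_cast at h0
    linear_combination (-2 : ZMod q) * h0
  | mul a b ha hb =>
    rw [mul_mod]
    rcases ha (dvd_of_mul_right_dvd hd) with h | h <;>
      rcases hb (dvd_of_mul_left_dvd hd) with h' | h' <;> simp [h, h']

theorem eq_zero_of_geom_sum_two_dvd_two_mul_sq_add_one {m e : ℕ}
    (h : (∑ i ∈ range (2 * e + 1), 2 ^ i) ∣ 2 * m ^ 2 + 1) : e = 0 := by
  by_contra he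
  have := geom_sum_two_mod_eight (n := 2 * e + 1) (by omega)
  have := mod_eight_of_dvd_two_mul_sq_add_one h
  omega

theorem exists_mod_eight_eq_three_of_prod {ι : Type*} {s : Finset ι} {f : ι → ℕ}
    (hf : ∀ i ∈ s, f i % 8 = 1 ∨ f i % 8 = 3) (h : (∏ i ∈ s, f i) % 8 = 3) :
    ∃ i ∈ s, f i % 8 = 3 := by
  by_contra! hne
  have := ModEq.prod_one fun i hi => ((hf i hi).resolve_right (hne i hi) : f i ≡ 1 [MOD 8])
  unfold ModEq at this
  omega

end Nat

theorem sigma_one_prod_prime_pow {ι : Type*} [Fintype ι] {p : ι → ℕ} (hp : ∀ i, (p i).Prime)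
    (hinj : Function.Injective p) (k : ι → ℕ) :
    sigma 1 (∏ i, p i ^ k i) = ∏ i, ∑ j ∈ range (k i + 1), p i ^ j := by
  rw [isMultiplicative_sigma.map_prod _ _ fun i _ j _ hij => ?_]
  · exact prod_congr rfl fun i _ => sigma_one_apply_prime_pow (hp i)
  · exact Nat.Coprime.pow _ _ ((Nat.coprime_primes (hp i) (hp j)).2 (hinj.ne hij))

theorem stmt_0_general (t : ℕ) (p a : Fin t → ℕ) (N m : ℕ)
    (hp : ∀ i, (p i).Prime) (hinj : Function.Injective p)
    (hN : N = ∏ i, p i ^ (2 * a i)) (hm : N = m ^ 2)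
    (hq : Quasiperfect N) :
    ∃ j : Fin t, p j % 4 = 1 ∧ ∀ d : ℕ, d ∣ 2 * a j + 1 → d % 8 ≠ 5 := by
  have hprod : 2 * N + 1 = ∏ i, ∑ k ∈ range (2 * a i + 1), p i ^ k := by
    rw [← hq.2, hN, sigma_one_prod_prime_pow hp hinj]
  have hfac (i : Fin t) : (∑ k ∈ range (2 * a i + 1), p i ^ k) ∣ 2 * N + 1 :=
    hprod ▸ dvd_prod_of_mem _ (mem_univ i)
  have hdvd {d : ℕ} (hd : d ∣ 2 * N + 1) : d % 8 = 1 ∨ d % 8 = 3 :=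
    Nat.mod_eight_of_dvd_two_mul_sq_add_one (hm ▸ hd)
  have htwo (i : Fin t) (h2 : p i = 2) : a i = 0 :=
    Nat.eq_zero_of_geom_sum_two_dvd_two_mul_sq_add_one (h2 ▸ hm ▸ hfac i)
  have hodd (i : Fin t) (hi : a i ≠ 0) : Odd (p i) :=
    (hp i).odd_of_ne_two fun h2 => hi (htwo i h2)
  have hNodd : Odd N := hN ▸ prod_induction _ Odd (fun _ _ => Odd.mul) odd_one fun i _ => by
    by_cases hi : a i = 0
    · simp [hi]
    · exact (hodd i hi).pow
  have hmod : (2 * N + 1) % 8 = 3 := by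
    rw [hm] at hNodd ⊢
    have := Nat.sq_mod_eight_of_odd ((Nat.odd_pow_iff two_ne_zero).1 hNodd)
    omega
  obtain ⟨j, -, hj⟩ :=
    Nat.exists_mod_eight_eq_three_of_prod (fun i _ => hdvd (hfac i)) (hprod ▸ hmod)
  have hj4 := Nat.mod_four_eq_one_of_geom_sum_mod_eight_eq_three
    (hodd j fun h0 => by simp [h0] at hj) hj
  refine ⟨j, hj4, fun d hd hd5 => ?_⟩
  have := hdvd ((geom_sum_dvd_geom_sum_of_dvd (p j) hd).trans (hfac j))
  have := Nat.geom_sum_mod_eight_eq_five hj4 hd5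
  omega

/-- If `N = p₁^{2a₁} ⋯ p_t^{2a_t} = m²` is quasiperfect, then there is an index `j`
with `p j ≡ 1 (mod 4)` such that `2 * a j + 1` has no divisor congruent to `5` mod `8`. -/
theorem stmt_0 (t : ℕ) (p a : Fin t → ℕ) (N m : ℕ)
    (hp : ∀ i, (p i).Prime) (hinj : Function.Injective p)
    (ha : ∀ i, 0 < a i)
    (hN : N = ∏ i, p i ^ (2 * a i)) (hm : N = m ^ 2)
    (hq : Quasiperfect N) :
    ∃ j : Fin t, p j % 4 = 1 ∧ ∀ d : ℕ, d ∣ 2 * a j + 1 → d % 8 ≠ 5 :=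
  stmt_0_general t p a N m hp hinj hN hm hq
end

section
/- If N = (p_1 p_2 ⋯ p_t)^{2a} = m^2 is a quasiperfect number (where p_1, ..., p_t are distinct primes and a is a positive integer), then every prime factor of N is congruent to 1 or 7 modulo 8. -/
open Finset

/-- Geometric sum of odd length for `x` with `x ^ 2 = 1`. -/
lemma geom_sum_sq_one {R : Type*} [CommRing R] (x : R) (h : x ^ 2 = 1) (a : ℕ) :
    ∑ k ∈ Finset.range (2 * a + 1), x ^ k = 1 + (a : R) * (x + 1) := by
  induction a with
  | zero => simp
  | succ a ih =>
    have h1 : 2 * (a + 1) + 1 = (2 * a + 1) + 1 + 1 := by ring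
    rw [h1, Finset.sum_range_succ, Finset.sum_range_succ, ih]
    have hx1 : x ^ (2 * a + 1) = x := by
      rw [pow_succ, pow_mul, h, one_pow, one_mul]
    have hx2 : x ^ (2 * a + 1 + 1) = 1 := by
      have : 2 * a + 1 + 1 = 2 * (a + 1) := by ring
      rw [this, pow_mul, h, one_pow]
    rw [hx1, hx2]
    push_cast
    ring

/-- Cast of geometric sum of a natural number. -/
lemma geom_sum_cast {n : ℕ} [NeZero n] (q a : ℕ) (h : ((q : ZMod n)) ^ 2 = 1) :
    ((∑ k ∈ Finset.range (2 * a + 1), q ^ k : ℕ) : ZMod n)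
      = 1 + (a : ZMod n) * ((q : ZMod n) + 1) := by
  rw [← geom_sum_sq_one (q : ZMod n) h a]
  push_cast
  rfl

lemma mod8_of_cast {n c : ℕ} (hc : c < 8) (h : (n : ZMod 8) = ((c : ℕ) : ZMod 8)) :
    n % 8 = c := by
  have := (ZMod.natCast_eq_natCast_iff' n c 8).mp h
  rwa [Nat.mod_eq_of_lt hc] at this

lemma cast_of_mod8 {n c : ℕ} (h : n % 8 = c) : (n : ZMod 8) = ((c : ℕ) : ZMod 8) := by
  rw [← ZMod.natCast_mod n 8, h]

lemma odd_cast_zmod8 {n : ℕ} (hn : n % 2 = 1) :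
    (n : ZMod 8) = 1 ∨ (n : ZMod 8) = 3 ∨ (n : ZMod 8) = 5 ∨ (n : ZMod 8) = 7 := by
  have h8 : n % 8 = 1 ∨ n % 8 = 3 ∨ n % 8 = 5 ∨ n % 8 = 7 := by omega
  rcases h8 with h | h | h | h <;> rw [← ZMod.natCast_mod n 8, h] <;> norm_num

lemma even_cast_zmod8 {n : ℕ} (hn : n % 2 = 0) :
    (n : ZMod 8) = 0 ∨ (n : ZMod 8) = 2 ∨ (n : ZMod 8) = 4 ∨ (n : ZMod 8) = 6 := by
  have h8 : n % 8 = 0 ∨ n % 8 = 2 ∨ n % 8 = 4 ∨ n % 8 = 6 := by omega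
  rcases h8 with h | h | h | h <;> rw [← ZMod.natCast_mod n 8, h] <;> norm_num

lemma key_even (A X s : ZMod 8)
    (hA : A = 0 ∨ A = 2 ∨ A = 4 ∨ A = 6)
    (hX : X = 1 ∨ X = 3 ∨ X = 5 ∨ X = 7)
    (hs : s = 1 + A * (X + 1)) (hmem : s = 1 ∨ s = 3) : s = 1 := by
  revert A X s; decide

lemma key_three (A s : ZMod 8)
    (hA : A = 1 ∨ A = 3 ∨ A = 5 ∨ A = 7)
    (hs : s = 1 + A * (3 + 1)) (hmem : s = 1 ∨ s = 3) : False := by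
  revert A s; decide

lemma key_final (c w : ZMod 8)
    (hc : c = 1 ∨ c = 3 ∨ c = 5 ∨ c = 7)
    (hw : w = 1 + c + c ^ 2) (hmem : w = 1 ∨ w = 3) : c = 1 ∨ c = 7 := by
  revert c w; decide

lemma sq_one_zmod3 {x : ZMod 3} (hx : x ≠ 0) : x ^ 2 = 1 := by
  revert x; decide

/-- `1 + q + q²` divides a geometric sum of length `3c`. -/
lemma one_add_q_add_q_sq_dvd (q c : ℕ) :
    (1 + q + q ^ 2) ∣ ∑ k ∈ Finset.range (3 * c), q ^ k := by
  induction c with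
  | zero => simp
  | succ c ih =>
    have h1 : 3 * (c + 1) = (3 * c) + 1 + 1 + 1 := by ring
    rw [h1, Finset.sum_range_succ, Finset.sum_range_succ, Finset.sum_range_succ]
    have h2 : (∑ k ∈ Finset.range (3 * c), q ^ k) + q ^ (3 * c) + q ^ (3 * c + 1)
        + q ^ (3 * c + 1 + 1) = (∑ k ∈ Finset.range (3 * c), q ^ k)
        + q ^ (3 * c) * (1 + q + q ^ 2) := by ring
    rw [h2]
    exact dvd_add ih (Dvd.intro _ (mul_comm _ _))

/-- If `N = (p₁ p₂ ⋯ p_t)^{2a} = m²` is quasiperfect, then every prime factor of `N`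
is congruent to `1` or `7` modulo `8`. -/
theorem stmt_1 (t : ℕ) (p : Fin t → ℕ) (a N m : ℕ)
    (hp : ∀ i, (p i).Prime) (hinj : Function.Injective p)
    (ha : 0 < a)
    (hN : N = (∏ i, p i) ^ (2 * a)) (hm : N = m ^ 2)
    (hq : Quasiperfect N) :
    ∀ q : ℕ, q.Prime → q ∣ N → q % 8 = 1 ∨ q % 8 = 7 := by
  classical
  obtain ⟨hNpos, hσ⟩ := hq
  -- product form of N
  have hNprod : N = ∏ i, p i ^ (2 * a) := by rw [hN, ← Finset.prod_pow]
  set S : Fin t → ℕ := fun i => ∑ k ∈ Finset.range (2 * a + 1), p i ^ k with hSdef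
  -- σ(N) = ∏ S i
  have hσprod : 2 * N + 1 = ∏ i, S i := by
    rw [← hσ, hNprod,
      ArithmeticFunction.IsMultiplicative.map_prod _
        ArithmeticFunction.isMultiplicative_sigma Finset.univ ?_]
    · exact Finset.prod_congr rfl fun i _ => by
        rw [ArithmeticFunction.sigma_one_apply_prime_pow (hp i)]
    · intro i _ j _ hij
      exact Nat.Coprime.pow _ _ ((Nat.coprime_primes (hp i) (hp j)).mpr fun h => hij (hinj h))
  have hSdvd : ∀ i, S i ∣ 2 * N + 1 := fun i =>
    hσprod ▸ Finset.dvd_prod_of_mem S (Finset.mem_univ i)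
  -- Cattaneo: every prime factor of σ(N) is 1 or 3 mod 8
  have hr8 : ∀ r : ℕ, r.Prime → r ∣ 2 * N + 1 → r % 8 = 1 ∨ r % 8 = 3 := by
    intro r hr hrdvd
    have hr2 : r ≠ 2 := by
      rintro rfl
      obtain ⟨c, hc⟩ := hrdvd
      omega
    haveI : Fact r.Prime := ⟨hr⟩
    have h0 : ((2 * N + 1 : ℕ) : ZMod r) = 0 :=
      (ZMod.natCast_eq_zero_iff _ _).mpr hrdvd
    rw [hm] at h0
    push_cast at h0
    have hsq : IsSquare (-2 : ZMod r) := by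
      refine ⟨2 * (m : ZMod r), ?_⟩
      linear_combination (-2 : ZMod r) * h0
    exact (ZMod.exists_sq_eq_neg_two_iff hr2).mp hsq
  -- every divisor of σ(N) is 1 or 3 mod 8
  have hdvd8 : ∀ d : ℕ, d ∣ 2 * N + 1 → d % 8 = 1 ∨ d % 8 = 3 := by
    intro d
    induction d using Nat.strong_induction_on with
    | _ d ih =>
      intro hd
      rcases eq_or_ne d 1 with rfl | hd1
      · left; rfl
      have hd0 : d ≠ 0 := by
        rintro rfl
        have := Nat.eq_zero_of_zero_dvd hd
        omega
      have hpf := Nat.minFac_prime hd1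
      have h1 := hr8 _ hpf ((Nat.minFac_dvd d).trans hd)
      have hlt : d / d.minFac < d :=
        Nat.div_lt_self (Nat.pos_of_ne_zero hd0) hpf.one_lt
      have h2 := ih _ hlt ((Nat.div_dvd_of_dvd (Nat.minFac_dvd d)).trans hd)
      have heq : d = d.minFac * (d / d.minFac) :=
        (Nat.mul_div_cancel' (Nat.minFac_dvd d)).symm
      rw [heq, Nat.mul_mod]
      rcases h1 with h1 | h1 <;> rcases h2 with h2 | h2 <;> rw [h1, h2] <;> norm_num
  -- membership of S i mod 8
  have hSmem : ∀ i, (S i : ZMod 8) = 1 ∨ (S i : ZMod 8) = 3 := by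
    intro i
    rcases hdvd8 _ (hSdvd i) with h | h
    · left
      have := cast_of_mod8 h
      simpa using this
    · right
      have := cast_of_mod8 h
      simpa using this
  -- each p i is odd
  have hp2 : ∀ i, p i ≠ 2 := by
    intro i hi2
    -- S i ≡ 7 mod 8
    have h7 : ∀ b : ℕ, ((∑ k ∈ Finset.range (3 + b), 2 ^ k : ℕ) : ZMod 8) = 7 := by
      intro b
      induction b with
      | zero => decide
      | succ b ihb =>
        have : 3 + (b + 1) = (3 + b) + 1 := by ring
        rw [this, Finset.sum_range_succ]
        push_cast
        push_cast at ihb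
        rw [ihb]
        have h2z : (2 : ZMod 8) ^ (3 + b) = 0 := by
          rw [pow_add]
          have h3 : (2 : ZMod 8) ^ 3 = 0 := by decide
          rw [h3, zero_mul]
        rw [h2z]
        ring
    have hlen : 2 * a + 1 = 3 + (2 * a - 2) := by omega
    have hScast : (S i : ZMod 8) = 7 := by
      rw [hSdef]
      simp only
      rw [hi2, hlen]
      exact h7 _
    rcases hSmem i with h | h <;> rw [hScast] at h <;> exact absurd h (by decide)
  have hpodd : ∀ i, p i % 2 = 1 := fun i =>
    (Nat.Prime.eq_two_or_odd (hp i)).resolve_left (hp2 i)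
  -- S i cast formula mod 8
  have hpsq8 : ∀ i, ((p i : ZMod 8)) ^ 2 = 1 := by
    intro i
    rcases odd_cast_zmod8 (hpodd i) with h | h | h | h <;> rw [h] <;> decide
  have hS8 : ∀ i, (S i : ZMod 8) = 1 + (a : ZMod 8) * ((p i : ZMod 8) + 1) :=
    fun i => geom_sum_cast (p i) a (hpsq8 i)
  -- N is odd, m is odd
  have hN2 : ¬ (2 : ℕ) ∣ N := by
    intro h2
    rw [hNprod] at h2
    obtain ⟨i, _, hdvd⟩ := Nat.prime_two.prime.exists_mem_finset_dvd h2
    have := Nat.Prime.dvd_of_dvd_pow (p := 2) Nat.prime_two hdvd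
    exact hp2 i ((Nat.prime_dvd_prime_iff_eq Nat.prime_two (hp i)).mp this).symm
  have hmodd : m % 2 = 1 := by
    rcases Nat.mod_two_eq_zero_or_one m with h | h
    · exfalso
      apply hN2
      rw [hm]
      exact dvd_pow (Nat.dvd_of_mod_eq_zero h) two_ne_zero
    · exact h
  -- σ(N) ≡ 3 mod 8
  have hσ8 : ((2 * N + 1 : ℕ) : ZMod 8) = 3 := by
    rw [hm]
    push_cast
    have : ((m : ZMod 8)) ^ 2 = 1 := by
      rcases odd_cast_zmod8 hmodd with h | h | h | h <;> rw [h] <;> decide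
    rw [this]
    norm_num
  -- a is odd
  have haodd : a % 2 = 1 := by
    by_contra hae
    have hae0 : a % 2 = 0 := by omega
    have hall : ∀ i, (S i : ZMod 8) = 1 := fun i =>
      key_even _ _ _ (even_cast_zmod8 hae0) (odd_cast_zmod8 (hpodd i))
        (hS8 i) (hSmem i)
    have : ((2 * N + 1 : ℕ) : ZMod 8) = 1 := by
      rw [hσprod]
      push_cast
      rw [Finset.prod_congr rfl fun i _ => hall i]
      simp
    rw [hσ8] at this
    exact absurd this (by decide)
  -- no p i equals 3
  have hp3 : ∀ i, p i ≠ 3 := by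
    intro i hi3
    have hcast3 : (p i : ZMod 8) = 3 := by rw [hi3]; norm_num
    exact key_three _ _ (odd_cast_zmod8 (by omega : a % 2 = 1)) (by
      rw [← hcast3]; exact hS8 i) (hSmem i)
  -- 3 does not divide N, hence not m
  have hN3 : ¬ (3 : ℕ) ∣ N := by
    intro h3
    rw [hNprod] at h3
    obtain ⟨i, _, hdvd⟩ := Nat.prime_three.prime.exists_mem_finset_dvd h3
    have := Nat.Prime.dvd_of_dvd_pow (p := 3) Nat.prime_three hdvd
    exact hp3 i ((Nat.prime_dvd_prime_iff_eq Nat.prime_three (hp i)).mp this).symm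
  have hm3 : ¬ (3 : ℕ) ∣ m := by
    intro h3
    exact hN3 (hm ▸ dvd_pow h3 two_ne_zero)
  -- 3 divides σ(N)
  have h3σ : (3 : ℕ) ∣ 2 * N + 1 := by
    have hmz : ((m : ZMod 3)) ≠ 0 := by
      intro h0
      exact hm3 ((ZMod.natCast_eq_zero_iff m 3).mp h0)
    have h0 : ((2 * N + 1 : ℕ) : ZMod 3) = 0 := by
      rw [hm]
      push_cast
      rw [sq_one_zmod3 hmz]
      decide
    exact (ZMod.natCast_eq_zero_iff _ 3).mp h0
  -- 3 divides 2a+1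
  have h3a : (3 : ℕ) ∣ 2 * a + 1 := by
    rw [hσprod] at h3σ
    obtain ⟨i, _, h3Si⟩ := Nat.prime_three.prime.exists_mem_finset_dvd h3σ
    have hSi0 : (S i : ZMod 3) = 0 := (ZMod.natCast_eq_zero_iff _ 3).mpr h3Si
    have hpi3 : ((p i : ZMod 3)) ≠ 0 := by
      intro h0
      have := (ZMod.natCast_eq_zero_iff (p i) 3).mp h0
      exact hp3 i ((Nat.prime_dvd_prime_iff_eq Nat.prime_three (hp i)).mp this).symm
    have hgeo : (S i : ZMod 3) = 1 + (a : ZMod 3) * ((p i : ZMod 3) + 1) :=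
      geom_sum_cast (p i) a (sq_one_zmod3 hpi3)
    rw [hSi0] at hgeo
    have hx12 : (p i : ZMod 3) = 1 ∨ (p i : ZMod 3) = 2 := by
      revert hpi3
      generalize (p i : ZMod 3) = x
      revert x; decide
    rcases hx12 with hx | hx
    · rw [hx] at hgeo
      have : ((2 * a + 1 : ℕ) : ZMod 3) = 0 := by
        push_cast
        linear_combination -hgeo
      exact (ZMod.natCast_eq_zero_iff _ 3).mp this
    · rw [hx] at hgeo
      exfalso
      have : (2 + 1 : ZMod 3) = 0 := by decide
      rw [this, mul_zero, add_zero] at hgeo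
      exact one_ne_zero hgeo.symm
  -- final argument
  intro q hqp hqdvd
  -- q = p i for some i
  obtain ⟨i, hqi⟩ : ∃ i, q = p i := by
    rw [hNprod] at hqdvd
    obtain ⟨i, _, hdvd⟩ := hqp.prime.exists_mem_finset_dvd hqdvd
    exact ⟨i, (Nat.prime_dvd_prime_iff_eq hqp (hp i)).mp
      (hqp.dvd_of_dvd_pow hdvd)⟩
  obtain ⟨c, hc⟩ := h3a
  -- 1 + q + q² divides S i
  have hfac : (1 + q + q ^ 2) ∣ S i := by
    rw [hSdef]
    simp only
    rw [← hqi, hc]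
    exact one_add_q_add_q_sq_dvd q c
  have hw : (1 + q + q ^ 2) % 8 = 1 ∨ (1 + q + q ^ 2) % 8 = 3 :=
    hdvd8 _ (hfac.trans (hSdvd i))
  have hwcast : ((1 + q + q ^ 2 : ℕ) : ZMod 8) = 1 ∨ ((1 + q + q ^ 2 : ℕ) : ZMod 8) = 3 := by
    rcases hw with h | h
    · left; have := cast_of_mod8 h; simpa using this
    · right; have := cast_of_mod8 h; simpa using this
  have hqodd : q % 2 = 1 := by rw [hqi]; exact hpodd i
  have hwf : ((1 + q + q ^ 2 : ℕ) : ZMod 8) = 1 + (q : ZMod 8) + (q : ZMod 8) ^ 2 := by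
    push_cast
    ring
  rw [hwf] at hwcast
  have hfin := key_final (q : ZMod 8) _ (odd_cast_zmod8 hqodd) rfl hwcast
  rcases hfin with h | h
  · left
    exact mod8_of_cast (by norm_num) (by rw [h]; norm_num)
  · right
    exact mod8_of_cast (by norm_num) (by rw [h]; norm_num)
end
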